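/- arXiv:1402.7308 — 5 statements merged into one kernel-verified Lean document; each statement's English description precedes it below -/
import Mathlib

section
/- Let H be a graph with at least two edges such that g_1(H) < g_2(H), and suppose there exists a connected subgraph H' of H that is not a clique (or is not proper) lying in Cl^c_H with 2 ≤ e(H') < e(H). Then g_2(H) < 1. -/
open SimpleGraph

noncomputable def vc {V : Type*} {G : SimpleGraph V} (H' : G.Subgraph) : ℕ := H'.verts.ncard
noncomputable def ec {V : Type*} {G : SimpleGraph V} (H' : G.Subgraph) : ℕ := H'.edgeSet.ncard

/-- The subgraph is a clique: every two distinct vertices are adjacent. -/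
def cliqueSub {V : Type*} {G : SimpleGraph V} (H' : G.Subgraph) : Prop :=
  H'.verts.Pairwise H'.Adj

/-- Values `(e(H')-1)/(v(H')-2)` over subgraphs with at least 3 vertices;
its greatest element is the maximum 2-density `m_2`. -/
def m2set {V : Type*} (G : SimpleGraph V) : Set ℚ :=
  {q | ∃ H' : G.Subgraph, 3 ≤ vc H' ∧ q = ((ec H' : ℚ) - 1) / ((vc H' : ℚ) - 2)}

/-- Values `e(H')/v(H')`; greatest element is the maximum density `m`. -/
def mset {V : Type*} (G : SimpleGraph V) : Set ℚ :=
  {q | ∃ H' : G.Subgraph, 1 ≤ vc H' ∧ q = (ec H' : ℚ) / (vc H' : ℚ)}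

/-- The set whose greatest element is `g_1(H)`. -/
def g1set {V : Type*} (G : SimpleGraph V) : Set ℚ :=
  {q | ∃ H' : G.Subgraph, ¬ (H' ≠ ⊤ ∧ cliqueSub H') ∧
    ((2 ≤ ec H' ∧ ec H' < ec (⊤ : G.Subgraph)) ∨ (ec H' = 0 ∧ vc H' = 2)) ∧
    q = ((vc (⊤ : G.Subgraph) : ℚ) - (vc H' : ℚ)) /
        ((ec (⊤ : G.Subgraph) : ℚ) - (ec H' : ℚ))}

/-- The set whose least element is `g_2(H)`. -/
def g2set {V : Type*} (G : SimpleGraph V) : Set ℚ :=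
  {q | ∃ H' : G.Subgraph, 2 ≤ ec H' ∧ ((H' ≠ ⊤ ∧ cliqueSub H') ∨ H' = ⊤) ∧
    q = ((vc H' : ℚ) - 2) / ((ec H' : ℚ) - 1)}

/-
Testing the maximality of `g₁(H)` at the connected subgraph `H'` and the minimality of `g₂(H)`
at `H` itself, and subtracting, gives `g₂(H) (e(H') - 1) < v(H') - 2`. A connected graph has
`v(H') ≤ e(H') + 1`, so `g₂(H) (e(H') - 1) < e(H') - 1`, and `e(H') ≥ 2` lets us cancel.
-/

lemma SimpleGraph.Subgraph.Connected.vc_le_ec_add_one {V : Type*} {G : SimpleGraph V}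
    {K : G.Subgraph} (hK : K.Connected) : vc K ≤ ec K + 1 := by
  have hE : Nat.card K.coe.edgeSet = ec K := by
    rw [ec, ← K.image_coe_edgeSet_coe,
      Set.ncard_image_of_injective _ (Sym2.map.injective Subtype.val_injective),
      Nat.card_coe_set_eq]
  simpa only [vc, ← hE, Nat.card_coe_set_eq] using hK.coe.card_vert_le_card_edgeSet_add_one

lemma lt_one_of_div_lt_of_le_div {k : Type*} [Field k] [LinearOrder k] [IsStrictOrderedRing k]
    {n e N E b : k} (he : 1 < e) (heE : e < E) (hn : n ≤ e + 1)
    (h₁ : (N - n) / (E - e) < b) (h₂ : b ≤ (N - 2) / (E - 1)) : b < 1 := by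
  rw [div_lt_iff₀ (sub_pos.2 heE)] at h₁
  rw [le_div_iff₀ (by linarith)] at h₂
  have key : b * (e - 1) < 1 * (e - 1) := by linarith
  exact lt_of_mul_lt_mul_right key (by linarith)

theorem stmt_3_general {V : Type*} (G : SimpleGraph V)
    (h2 : 2 ≤ ec (⊤ : G.Subgraph))
    (a b : ℚ) (ha : IsGreatest (g1set G) a) (hb : IsLeast (g2set G) b)
    (hab : a < b)
    (hconn : ∃ H' : G.Subgraph, H'.Connected ∧ ¬ (H' ≠ ⊤ ∧ cliqueSub H') ∧
      2 ≤ ec H' ∧ ec H' < ec (⊤ : G.Subgraph)) :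
    b < 1 := by
  obtain ⟨K, hKconn, hKnc, hK2, hKlt⟩ := hconn
  have hg₁ := ha.2 ⟨K, hKnc, Or.inl ⟨hK2, hKlt⟩, rfl⟩
  have hg₂ := hb.2 ⟨⊤, h2, Or.inr rfl, rfl⟩
  refine lt_one_of_div_lt_of_le_div ?_ ?_ ?_ (hg₁.trans_lt hab) hg₂
  · exact_mod_cast hK2
  · exact_mod_cast hKlt
  · exact_mod_cast hKconn.vc_le_ec_add_one

/-- If `H` has at least two edges, `g₁(H) < g₂(H)`, and there is a connected
subgraph `H' ∈ Cl^c_H` with `2 ≤ e(H') < e(H)`, then `g₂(H) < 1`. -/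
theorem stmt_3 {V : Type*} [Fintype V] (G : SimpleGraph V)
    (h2 : 2 ≤ ec (⊤ : G.Subgraph))
    (a b : ℚ) (ha : IsGreatest (g1set G) a) (hb : IsLeast (g2set G) b)
    (hab : a < b)
    (hconn : ∃ H' : G.Subgraph, H'.Connected ∧ ¬ (H' ≠ ⊤ ∧ cliqueSub H') ∧
      2 ≤ ec H' ∧ ec H' < ec (⊤ : G.Subgraph)) :
    b < 1 :=
  stmt_3_general G h2 a b ha hb hab hconn
end

section
/- Let H be a graph with at least two edges and no isolated vertices, let s be a positive integer, and let p be a real number with s^{-1/m_2(H)} ≤ p ≤ 1. Then min{s^{v(H')} p^{e(H')} : H' ⊆ H, e(H') ≥ 1} = s^2 p. -/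
open SimpleGraph

lemma my_vc_two {V : Type*} [Fintype V] {G : SimpleGraph V} {H' : G.Subgraph}
    (h : 1 ≤ ec H') : 2 ≤ vc H' := by
  obtain ⟨e, he⟩ := Set.nonempty_of_ncard_ne_zero (by omega : ec H' ≠ 0)
  induction e using Sym2.ind with
  | _ a b =>
    have hadj : H'.Adj a b := he
    have hsub : ({a, b} : Set V) ⊆ H'.verts := by
      intro x hx
      rcases hx with rfl | rfl
      · exact hadj.fst_mem
      · exact hadj.snd_mem
    calc 2 = ({a, b} : Set V).ncard := (Set.ncard_pair hadj.ne).symm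
      _ ≤ H'.verts.ncard := Set.ncard_le_ncard hsub (Set.toFinite _)

lemma my_vc_three {V : Type*} [Fintype V] {G : SimpleGraph V} {H' : G.Subgraph}
    (h : 2 ≤ ec H') : 3 ≤ vc H' := by
  obtain ⟨e₁, e₂, he₁, he₂, hne⟩ := (Set.one_lt_ncard_iff (Set.toFinite _)).1
    (by omega : 1 < ec H')
  induction e₁ using Sym2.ind with
  | _ a b =>
  induction e₂ using Sym2.ind with
  | _ c d =>
    have h1 : H'.Adj a b := he₁
    have h2 : H'.Adj c d := he₂
    have hx : ∃ x, H'.Adj x c ∨ H'.Adj x d ∨ H'.Adj c x ∨ H'.Adj d x → True := ⟨a, fun _ => trivial⟩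
    have hcd : c ∉ ({a, b} : Set V) ∨ d ∉ ({a, b} : Set V) := by
      by_contra hcon
      push_neg at hcon
      obtain ⟨hc, hd⟩ := hcon
      apply hne
      rcases hc with rfl | rfl <;> rcases hd with rfl | rfl
      · exact absurd rfl h2.ne
      · rfl
      · exact Sym2.eq_swap
      · exact absurd rfl h2.ne.symm
    obtain ⟨x, hxv, hxab⟩ : ∃ x, x ∈ H'.verts ∧ x ∉ ({a, b} : Set V) := by
      rcases hcd with h' | h'
      · exact ⟨c, h2.fst_mem, h'⟩
      · exact ⟨d, h2.snd_mem, h'⟩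
    have hsub : ({x, a, b} : Set V) ⊆ H'.verts := by
      intro y hy
      rcases hy with rfl | rfl | rfl
      · exact hxv
      · exact h1.fst_mem
      · exact h1.snd_mem
    have hxa : x ≠ a := fun h => hxab (by rw [h]; left; rfl)
    have hxb : x ≠ b := fun h => hxab (by rw [h]; right; rfl)
    have hcard : ({x, a, b} : Set V).ncard = 3 := by
      rw [Set.ncard_insert_of_notMem (by simp [hxa, hxb]) (Set.toFinite _),
        Set.ncard_pair h1.ne]
    calc 3 = ({x, a, b} : Set V).ncard := hcard.symm
      _ ≤ H'.verts.ncard := Set.ncard_le_ncard hsub (Set.toFinite _)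


/-- If `H` has at least two edges, no isolated vertices, and
`s^{-1/m₂(H)} ≤ p ≤ 1`, then `min{s^{v(H')} p^{e(H')} : H' ⊆ H, e(H') ≥ 1} = s² p`. -/
theorem stmt_4 {V : Type*} [Fintype V] (G : SimpleGraph V)
    (h2 : 2 ≤ ec (⊤ : G.Subgraph))
    (hiso : ∀ v : V, ∃ w : V, G.Adj v w)
    (s : ℕ) (hs : 1 ≤ s) (m : ℚ) (hm : IsGreatest (m2set G) m)
    (p : ℝ) (hp : (s : ℝ) ^ (-(1 / (m : ℝ))) ≤ p) (hp1 : p ≤ 1) :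
    IsLeast {x : ℝ | ∃ H' : G.Subgraph, 1 ≤ ec H' ∧
        x = (s : ℝ) ^ (vc H') * p ^ (ec H')}
      ((s : ℝ) ^ 2 * p) := by
  -- two distinct edges of G
  obtain ⟨e₁, e₂, he₁, he₂, hne⟩ := (Set.one_lt_ncard_iff (Set.toFinite _)).1
    (by omega : 1 < ec (⊤ : G.Subgraph))
  have he₁' : e₁ ∈ G.edgeSet := he₁
  have he₂' : e₂ ∈ G.edgeSet := he₂
  -- positivity of m
  have hmpos : 0 < m := by
    induction e₁ using Sym2.ind with
    | _ a b =>
    induction e₂ using Sym2.ind with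
    | _ c d =>
      have h1 : G.Adj a b := he₁'
      have h2' : G.Adj c d := he₂'
      set H₂ : G.Subgraph := G.subgraphOfAdj h1 ⊔ G.subgraphOfAdj h2' with hH₂
      have hedges : H₂.edgeSet = {s(a, b), s(c, d)} := by
        rw [hH₂, Subgraph.edgeSet_sup, SimpleGraph.edgeSet_subgraphOfAdj,
          SimpleGraph.edgeSet_subgraphOfAdj]
        rfl
      have hec : ec H₂ = 2 := by
        rw [ec, hedges, Set.ncard_pair hne]
      have hv3 : 3 ≤ vc H₂ := my_vc_three (by omega)
      have hmem : ((ec H₂ : ℚ) - 1) / ((vc H₂ : ℚ) - 2) ∈ m2set G := ⟨H₂, hv3, rfl⟩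
      have hle := hm.2 hmem
      have hq : 0 < ((ec H₂ : ℚ) - 1) / ((vc H₂ : ℚ) - 2) := by
        apply div_pos
        · rw [hec]; norm_num
        · have : (3 : ℚ) ≤ (vc H₂ : ℚ) := by exact_mod_cast hv3
          linarith
      linarith
  have hmposR : 0 < (m : ℝ) := by exact_mod_cast hmpos
  have hs1 : (1 : ℝ) ≤ (s : ℝ) := by exact_mod_cast hs
  have hsp : (0 : ℝ) < (s : ℝ) := by linarith
  have hp0 : 0 < p := lt_of_lt_of_le (Real.rpow_pos_of_pos hsp _) hp
  constructor
  · -- membership: a single-edge subgraph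
    induction e₁ using Sym2.ind with
    | _ a b =>
      have h1 : G.Adj a b := he₁'
      refine ⟨G.subgraphOfAdj h1, ?_, ?_⟩
      · rw [ec, SimpleGraph.edgeSet_subgraphOfAdj, Set.ncard_singleton]
      · have hv : vc (G.subgraphOfAdj h1) = 2 := by
          rw [vc]
          show ({a, b} : Set V).ncard = 2
          exact Set.ncard_pair h1.ne
        have he : ec (G.subgraphOfAdj h1) = 1 := by
          rw [ec, SimpleGraph.edgeSet_subgraphOfAdj, Set.ncard_singleton]
        rw [hv, he, pow_one]
  · -- lower bound
    rintro x ⟨H', he1, rfl⟩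
    set v := vc H' with hv
    set e := ec H' with he
    have hv2 : 2 ≤ v := my_vc_two he1
    have key : (e : ℚ) - 1 ≤ m * ((v : ℚ) - 2) := by
      by_cases h2e : 2 ≤ e
      · have hv3 : 3 ≤ v := my_vc_three h2e
        have hmem : ((e : ℚ) - 1) / ((v : ℚ) - 2) ∈ m2set G := ⟨H', hv3, rfl⟩
        have hle := hm.2 hmem
        have hpos : (0 : ℚ) < (v : ℚ) - 2 := by
          have : (3 : ℚ) ≤ (v : ℚ) := by exact_mod_cast hv3
          linarith
        calc (e : ℚ) - 1 = ((e : ℚ) - 1) / ((v : ℚ) - 2) * ((v : ℚ) - 2) := by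
              field_simp
          _ ≤ m * ((v : ℚ) - 2) := by
              apply mul_le_mul_of_nonneg_right hle (le_of_lt hpos)
      · have he1' : e = 1 := by omega
        have : (0 : ℚ) ≤ m * ((v : ℚ) - 2) := by
          apply mul_nonneg (le_of_lt hmpos)
          have : (2 : ℚ) ≤ (v : ℚ) := by exact_mod_cast hv2
          linarith
        rw [he1']
        simpa using this
    have keyR : (e : ℝ) - 1 ≤ (m : ℝ) * ((v : ℝ) - 2) := by exact_mod_cast key
    have hv2R : (2 : ℝ) ≤ (v : ℝ) := by exact_mod_cast hv2
    have he1R : (1 : ℝ) ≤ (e : ℝ) := by exact_mod_cast he1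
    -- 1 ≤ s^(v-2) * p^(e-1)
    have hA : (1 : ℝ) ≤ (s : ℝ) ^ ((v : ℝ) - 2) * p ^ ((e : ℝ) - 1) := by
      have hpe : (s : ℝ) ^ ((-(1 / (m : ℝ))) * ((e : ℝ) - 1)) ≤ p ^ ((e : ℝ) - 1) := by
        rw [Real.rpow_mul (le_of_lt hsp)]
        exact Real.rpow_le_rpow (Real.rpow_nonneg (le_of_lt hsp) _) hp (by linarith)
      have hexp : (0 : ℝ) ≤ ((v : ℝ) - 2) + (-(1 / (m : ℝ))) * ((e : ℝ) - 1) := by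
        have h1 : ((e : ℝ) - 1) / (m : ℝ) ≤ (v : ℝ) - 2 := by
          rw [div_le_iff₀ hmposR]
          linarith
        have h2' : (-(1 / (m : ℝ))) * ((e : ℝ) - 1) = -(((e : ℝ) - 1) / (m : ℝ)) := by
          ring
        rw [h2']
        linarith
      calc (1 : ℝ) ≤ (s : ℝ) ^ (((v : ℝ) - 2) + (-(1 / (m : ℝ))) * ((e : ℝ) - 1)) :=
            Real.one_le_rpow hs1 hexp
        _ = (s : ℝ) ^ ((v : ℝ) - 2) * (s : ℝ) ^ ((-(1 / (m : ℝ))) * ((e : ℝ) - 1)) :=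
            Real.rpow_add hsp _ _
        _ ≤ (s : ℝ) ^ ((v : ℝ) - 2) * p ^ ((e : ℝ) - 1) := by
            apply mul_le_mul_of_nonneg_left hpe (Real.rpow_nonneg (le_of_lt hsp) _)
    have es : (s : ℝ) ^ v = (s : ℝ) ^ 2 * (s : ℝ) ^ ((v : ℝ) - 2) := by
      rw [← Real.rpow_natCast (s : ℝ) v, ← Real.rpow_natCast (s : ℝ) 2,
        ← Real.rpow_add hsp]
      norm_num
    have ep : p ^ e = p * p ^ ((e : ℝ) - 1) := by
      rw [← Real.rpow_natCast p e]
      nth_rewrite 2 [← Real.rpow_one p]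
      rw [← Real.rpow_add hp0]
      norm_num
    calc (s : ℝ) ^ 2 * p = (s : ℝ) ^ 2 * p * 1 := by ring
      _ ≤ (s : ℝ) ^ 2 * p * ((s : ℝ) ^ ((v : ℝ) - 2) * p ^ ((e : ℝ) - 1)) := by
          apply mul_le_mul_of_nonneg_left hA (by positivity)
      _ = (s : ℝ) ^ v * p ^ e := by rw [es, ep]; ring
end

section
/- Let H be a graph with at least two edges and no isolated vertices, let 0 < c_0 ≤ 1, let s be a positive integer, and let p be a real with 0 < p ≤ c_0^{-1} s^{-g_1(H)}. Then for every subgraph H_0 of H with e(H_0) ≥ 2 that is not a proper clique subgraph of H (i.e., H_0 ∈ Cl^c_H), one has s^{v(H_0)} p^{e(H_0)} ≥ c_0^{e(H)} s^{v(H)} p^{e(H)}. -/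
open SimpleGraph

/-- If `H` has at least two edges, no isolated vertices, `0 < c₀ ≤ 1` and
`0 < p ≤ c₀⁻¹ s^{-g₁(H)}`, then every subgraph `H₀ ∈ Cl^c_H` with `e(H₀) ≥ 2`
satisfies `s^{v(H₀)} p^{e(H₀)} ≥ c₀^{e(H)} s^{v(H)} p^{e(H)}`. -/
theorem stmt_5 {V : Type*} [Fintype V] (G : SimpleGraph V)
    (h2 : 2 ≤ ec (⊤ : G.Subgraph))
    (hiso : ∀ v : V, ∃ w : V, G.Adj v w)
    (c0 : ℝ) (hc0 : 0 < c0) (hc1 : c0 ≤ 1)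
    (s : ℕ) (hs : 1 ≤ s) (g : ℚ) (hg : IsGreatest (g1set G) g)
    (p : ℝ) (hp0 : 0 < p) (hp : p ≤ c0⁻¹ * (s : ℝ) ^ (-(g : ℝ))) :
    ∀ H0 : G.Subgraph, 2 ≤ ec H0 → ¬ (H0 ≠ ⊤ ∧ cliqueSub H0) →
      c0 ^ (ec (⊤ : G.Subgraph)) * (s : ℝ) ^ (vc (⊤ : G.Subgraph)) *
          p ^ (ec (⊤ : G.Subgraph))
        ≤ (s : ℝ) ^ (vc H0) * p ^ (ec H0) := by

  intro H0 he0 hcl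
  have hsR : (1:ℝ) ≤ (s:ℝ) := by exact_mod_cast hs
  have hsR0 : (0:ℝ) < (s:ℝ) := lt_of_lt_of_le one_pos hsR
  have hfin : (⊤ : G.Subgraph).edgeSet.Finite := Set.toFinite _
  have hee : ec H0 ≤ ec (⊤ : G.Subgraph) :=
    Set.ncard_le_ncard (SimpleGraph.Subgraph.edgeSet_mono le_top) hfin
  have hvv : vc H0 ≤ vc (⊤ : G.Subgraph) := by
    apply Set.ncard_le_ncard _ (Set.toFinite _)
    simp
  have h1 : c0 ^ ec H0 ≤ 1 := pow_le_one₀ hc0.le hc1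
  rcases eq_or_lt_of_le hee with heq | hlt
  · -- equal edge counts
    have hEdge : H0.edgeSet = (⊤ : G.Subgraph).edgeSet := by
      apply Set.eq_of_subset_of_ncard_le (SimpleGraph.Subgraph.edgeSet_mono le_top) _ hfin
      exact le_of_eq heq.symm
    have hverts : H0.verts = Set.univ := by
      ext x
      simp only [Set.mem_univ, iff_true]
      obtain ⟨w, hw⟩ := hiso x
      have hx : s(x, w) ∈ H0.edgeSet := by
        rw [hEdge]; simpa using hw
      exact (SimpleGraph.Subgraph.mem_edgeSet.mp hx).fst_mem
    have hv : vc H0 = vc (⊤ : G.Subgraph) := by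
      simp [vc, hverts]
    rw [hv, ← heq]
    have hpos : (0:ℝ) ≤ (s:ℝ) ^ (vc (⊤ : G.Subgraph)) * p ^ (ec H0) := by positivity
    calc c0 ^ ec H0 * (s:ℝ) ^ (vc (⊤ : G.Subgraph)) * p ^ (ec H0)
        = c0 ^ ec H0 * ((s:ℝ) ^ (vc (⊤ : G.Subgraph)) * p ^ (ec H0)) := by ring
      _ ≤ 1 * ((s:ℝ) ^ (vc (⊤ : G.Subgraph)) * p ^ (ec H0)) :=
          mul_le_mul_of_nonneg_right h1 hpos
      _ = _ := by ring
  · -- strict inequality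
    have hmem : ((vc (⊤ : G.Subgraph) : ℚ) - (vc H0 : ℚ)) /
        ((ec (⊤ : G.Subgraph) : ℚ) - (ec H0 : ℚ)) ∈ g1set G :=
      ⟨H0, hcl, Or.inl ⟨he0, hlt⟩, rfl⟩
    have hleq : ((vc (⊤ : G.Subgraph) : ℚ) - (vc H0 : ℚ)) /
        ((ec (⊤ : G.Subgraph) : ℚ) - (ec H0 : ℚ)) ≤ g := hg.2 hmem
    have hden : (0:ℚ) < (ec (⊤ : G.Subgraph) : ℚ) - (ec H0 : ℚ) := by
      have : (ec H0 : ℚ) < (ec (⊤ : G.Subgraph) : ℚ) := by exact_mod_cast hlt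
      linarith
    have hQ : ((vc (⊤ : G.Subgraph) : ℚ) - (vc H0 : ℚ)) ≤
        g * ((ec (⊤ : G.Subgraph) : ℚ) - (ec H0 : ℚ)) := by
      rw [div_le_iff₀ hden] at hleq
      exact hleq
    obtain ⟨d, hd⟩ : ∃ d, ec (⊤ : G.Subgraph) = ec H0 + d :=
      ⟨_, (Nat.add_sub_cancel' hee).symm⟩
    obtain ⟨dv, hdv⟩ : ∃ dv, vc (⊤ : G.Subgraph) = vc H0 + dv :=
      ⟨_, (Nat.add_sub_cancel' hvv).symm⟩
    have hR : (dv : ℝ) ≤ (g : ℝ) * (d : ℝ) := by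
      have := hQ
      rw [hd, hdv] at this
      push_cast at this ⊢
      exact_mod_cast by push_cast at this; linarith
    have hsdv : (s:ℝ) ^ dv ≤ (s:ℝ) ^ ((g:ℝ) * (d:ℝ)) := by
      rw [← Real.rpow_natCast (s:ℝ) dv]
      exact Real.rpow_le_rpow_of_exponent_le hsR hR
    have hpd : p ^ d ≤ (c0⁻¹ * (s:ℝ) ^ (-(g:ℝ))) ^ d := pow_le_pow_left₀ hp0.le hp d
    have hrhs : c0 ^ d * (s:ℝ) ^ ((g:ℝ) * (d:ℝ)) * (c0⁻¹ * (s:ℝ) ^ (-(g:ℝ))) ^ d = 1 := by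
      rw [mul_pow, ← Real.rpow_natCast ((s:ℝ) ^ (-(g:ℝ))) d, ← Real.rpow_mul hsR0.le,
        show c0 ^ d * (s:ℝ) ^ ((g:ℝ) * (d:ℝ)) * (c0⁻¹ ^ d * (s:ℝ) ^ (-(g:ℝ) * (d:ℝ)))
          = (c0 * c0⁻¹) ^ d * ((s:ℝ) ^ ((g:ℝ) * (d:ℝ)) * (s:ℝ) ^ (-(g:ℝ) * (d:ℝ))) by ring,
        ← Real.rpow_add hsR0, mul_inv_cancel₀ hc0.ne', one_pow]
      norm_num
    have key : c0 ^ d * (s:ℝ) ^ dv * p ^ d ≤ 1 := by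
      calc c0 ^ d * (s:ℝ) ^ dv * p ^ d
          ≤ c0 ^ d * (s:ℝ) ^ ((g:ℝ) * (d:ℝ)) * (c0⁻¹ * (s:ℝ) ^ (-(g:ℝ))) ^ d := by
            apply mul_le_mul (mul_le_mul_of_nonneg_left hsdv (by positivity)) hpd
              (by positivity) (by positivity)
        _ = 1 := hrhs
    rw [hd, hdv, pow_add, pow_add, pow_add]
    have hpos : (0:ℝ) ≤ (s:ℝ) ^ (vc H0) * p ^ (ec H0) := by positivity
    calc c0 ^ ec H0 * c0 ^ d * ((s:ℝ) ^ vc H0 * (s:ℝ) ^ dv) * (p ^ ec H0 * p ^ d)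
        = (c0 ^ ec H0 * (c0 ^ d * (s:ℝ) ^ dv * p ^ d)) * ((s:ℝ) ^ vc H0 * p ^ ec H0) := by
          ring
      _ ≤ (1 * 1) * ((s:ℝ) ^ vc H0 * p ^ ec H0) := by
          apply mul_le_mul_of_nonneg_right _ hpos
          exact mul_le_mul h1 key (by positivity) zero_le_one
      _ = _ := by ring
end

section
/- Let k ≥ 3 be an integer and 1 ≤ i ≤ k-2. Let H_i be the graph obtained from the complete graph K_k by deleting i edges e_1,...,e_i that form two edge-disjoint matchings M_1 of size ⌊k/2⌋ and M_2 of size k-2-⌊k/2⌋ (taking the first i edges of M_1 followed by edges of M_2). If k ≠ 5 or i ≠ 3, then g_1(H_i) = (v(H_i)-2)/e(H_i) = (k-2)/(binom(k,2)-i). -/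
open SimpleGraph

/-!
Two isolated vertices of `H_i` attain the value `(k - 2) / e(H_i)`. Every other admissible `H'`
is not a clique, and after cross-multiplying one needs `(k - 2) e(H') ≤ (v(H') - 2) e(H_i)`.
With `n = v(H')`, `H'` misses at least one pair of its vertex set, and it misses every deleted
edge inside its vertex set; as each outside vertex meets at most one edge of each matching, at
most `2 (k - n)` deleted edges leave that set. These two bounds on `e(H')` give the inequality.
-/

open Finset

namespace SimpleGraph.Subgraph

variable {V : Type*} {G : SimpleGraph V}

lemma vc_top [Fintype V] : vc (⊤ : G.Subgraph) = Fintype.card V := by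
  simp [vc, Set.ncard_univ, Nat.card_eq_fintype_card]

lemma vc_sup_singletonSubgraph {a b : V} (hab : a ≠ b) :
    vc (G.singletonSubgraph a ⊔ G.singletonSubgraph b) = 2 := by
  simp [vc, Set.ncard_pair hab.symm]

lemma ec_sup_singletonSubgraph (a b : V) :
    ec (G.singletonSubgraph a ⊔ G.singletonSubgraph b) = 0 := by
  simp [ec]

lemma not_cliqueSub_sup_singletonSubgraph {a b : V} (hab : a ≠ b) :
    ¬ cliqueSub (G.singletonSubgraph a ⊔ G.singletonSubgraph b) := by
  intro h
  simpa using h (by simp : a ∈ _) (by simp : b ∈ _) hab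

variable [Fintype V]

lemma ec_add_card_le_choose_two {H : G.Subgraph} {S : Finset V} (hS : H.verts = S)
    {F : Finset (Sym2 V)} (hFverts : F ⊆ S.sym2) (hFdiag : ∀ z ∈ F, ¬ z.IsDiag)
    (hFedge : ∀ z ∈ F, z ∉ H.edgeSet) :
    ec H + #F ≤ (vc H).choose 2 := by
  classical
  have hoff : ∀ z ∈ S.sym2, ¬ z.IsDiag → z ∈ S.offDiag.image Sym2.mk.uncurry := by
    intro z
    induction z using Sym2.ind with
    | _ a b =>
      intro hz hab
      rw [mk_mem_sym2_iff] at hz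
      exact mem_image_of_mem _ (mem_offDiag.2 ⟨hz.1, hz.2, by simpa using hab⟩)
  have hsub : H.edgeSet.toFinset ∪ F ⊆ S.offDiag.image Sym2.mk.uncurry := by
    refine union_subset (fun z hz => ?_) fun z hz => hoff z (hFverts hz) (hFdiag z hz)
    rw [Set.mem_toFinset] at hz
    refine hoff z (mem_sym2_iff.2 fun v hv => ?_)
      (G.not_isDiag_of_mem_edgeSet (H.edgeSet_subset hz))
    exact Finset.mem_coe.1 (hS ▸ H.mem_verts_of_mem_edge hz hv)
  have hdisj : Disjoint H.edgeSet.toFinset F :=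
    disjoint_right.2 fun z hz hz' => hFedge z hz (Set.mem_toFinset.1 hz')
  calc ec H + #F = #(H.edgeSet.toFinset ∪ F) := by
        rw [card_union_of_disjoint hdisj, ec, Set.ncard_eq_toFinset_card']
    _ ≤ #(S.offDiag.image Sym2.mk.uncurry) := card_le_card hsub
    _ = (vc H).choose 2 := by rw [Sym2.card_image_offDiag, vc, hS, Set.ncard_coe_finset]

lemma ec_add_one_le_choose_two (H : G.Subgraph) (hH : ¬ cliqueSub H) :
    ec H + 1 ≤ (vc H).choose 2 := by
  obtain ⟨a, ha, b, hb, hab, hnadj⟩ :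
      ∃ a ∈ H.verts, ∃ b ∈ H.verts, a ≠ b ∧ ¬ H.Adj a b := by
    simpa [cliqueSub, Set.Pairwise] using hH
  obtain ⟨S, hS⟩ := H.verts.toFinite.exists_finset_coe
  rw [← hS] at ha hb
  simpa using ec_add_card_le_choose_two hS.symm (F := {s(a, b)}) (by simpa using ⟨ha, hb⟩)
    (by simpa using hab) (by simpa using hnadj)

lemma ec_add_card_inter_sym2_le_choose_two [DecidableEq V] {D : Finset (Sym2 V)}
    (hD : ∀ z ∈ D, ¬ z.IsDiag) {H : (G.deleteEdges ↑D).Subgraph} {S : Finset V}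
    (hS : H.verts = S) :
    ec H + #(D ∩ S.sym2) ≤ (vc H).choose 2 :=
  ec_add_card_le_choose_two hS inter_subset_right (fun z hz => hD z (mem_of_mem_inter_left hz))
    fun z hz hzH => (by simpa using H.edgeSet_subset hzH : z ∈ G.edgeSet ∧ z ∉ D).2
      (mem_of_mem_inter_left hz)

end SimpleGraph.Subgraph

section Matchings

variable {V : Type*} [Fintype V] [DecidableEq V]

lemma card_sdiff_sym2_le_card_compl {M : Finset (Sym2 V)}
    (hM : ∀ e ∈ M, ∀ f ∈ M, e ≠ f → ∀ v : V, v ∈ e → v ∉ f) (S : Finset V) :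
    #(M \ S.sym2) ≤ #Sᶜ :=
  card_le_card_of_forall_subsingleton (fun z v => v ∈ z)
    (fun z hz => by
      obtain ⟨v, hvz, hvS⟩ : ∃ v ∈ z, v ∉ S := by
        simpa [mem_sym2_iff] using (mem_sdiff.1 hz).2
      exact ⟨v, mem_compl.2 hvS, hvz⟩)
    fun v _ z hz z' hz' => by_contra fun hne =>
      hM z (mem_sdiff.1 hz.1).1 z' (mem_sdiff.1 hz'.1).1 hne v hz.2 hz'.2

lemma card_sdiff_sym2_le_two_mul_card_compl {M₁ M₂ D : Finset (Sym2 V)}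
    (hM₁ : ∀ e ∈ M₁, ∀ f ∈ M₁, e ≠ f → ∀ v : V, v ∈ e → v ∉ f)
    (hM₂ : ∀ e ∈ M₂, ∀ f ∈ M₂, e ≠ f → ∀ v : V, v ∈ e → v ∉ f)
    (hD : D ⊆ M₁ ∪ M₂) (S : Finset V) :
    #(D \ S.sym2) ≤ 2 * #Sᶜ :=
  calc #(D \ S.sym2) ≤ #(M₁ \ S.sym2 ∪ M₂ \ S.sym2) :=
        card_le_card (union_sdiff_distrib M₁ M₂ S.sym2 ▸ sdiff_subset_sdiff hD le_rfl)
    _ ≤ #(M₁ \ S.sym2) + #(M₂ \ S.sym2) := card_union_le _ _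
    _ ≤ 2 * #Sᶜ := by
        have := card_sdiff_sym2_le_card_compl hM₁ S
        have := card_sdiff_sym2_le_card_compl hM₂ S
        omega

end Matchings

lemma two_mul_cast_choose_two (n : ℕ) : 2 * (n.choose 2 : ℤ) = n * (n - 1) := by
  have h : ((2 * n.choose 2 : ℤ) : ℚ) = ((n * (n - 1) : ℤ) : ℚ) := by
    push_cast
    rw [Nat.cast_choose_two]
    ring
  exact_mod_cast h

lemma sub_two_mul_two_mul_le {k n i e : ℤ} (hn : 2 ≤ n) (hnk : n ≤ k) (hik : i + 2 ≤ k)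
    (hki : k ≠ 5 ∨ i ≠ 3) (hmiss : 2 * e + 2 ≤ n * (n - 1))
    (hdel : 2 * e + 2 * i ≤ n * (n - 1) + 4 * (k - n)) :
    (k - 2) * (2 * e) ≤ (n - 2) * (k * (k - 1) - 2 * i) := by
  -- For `k ≥ 6`, eliminating `i` by `hdel` and `e` by `hmiss` leaves
  -- `(k - n) (n - 2) (k - 6) ≥ 0`.
  -- The cases `k ≤ 5` are finite; `k = 5, n = 4, i = 3` is the one where the bound fails.
  rcases le_or_gt 6 k with hk6 | hk5
  · nlinarith [mul_le_mul_of_nonneg_left hdel (by omega : (0 : ℤ) ≤ n - 2),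
      mul_le_mul_of_nonneg_left hmiss (by omega : (0 : ℤ) ≤ k - n),
      mul_nonneg (mul_nonneg (by omega : (0 : ℤ) ≤ k - n) (by omega : (0 : ℤ) ≤ n - 2))
        (by omega : (0 : ℤ) ≤ k - 6)]
  · have hk2 : 2 ≤ k := hn.trans hnk
    interval_cases k <;> interval_cases n <;> omega

lemma ec_top_deleteEdges_add_card {V : Type*} [Fintype V] [DecidableEq V] {D : Finset (Sym2 V)}
    (hD : ∀ z ∈ D, ¬ z.IsDiag) :
    ec (⊤ : ((⊤ : SimpleGraph V).deleteEdges ↑D).Subgraph) + #D =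
      (Fintype.card V).choose 2 := by
  have hsub : (D : Set (Sym2 V)) ⊆ (⊤ : SimpleGraph V).edgeSet := fun z hz => by
    simpa using hD z hz
  rw [ec, Subgraph.edgeSet_top, edgeSet_deleteEdges, ← Set.ncard_coe_finset D,
    Set.ncard_sdiff_add_ncard_of_subset hsub, ← card_edgeFinset_top_eq_card_choose_two,
    Set.ncard_eq_toFinset_card']
  rfl

lemma isGreatest_g1set_of_forall_not_cliqueSub {V : Type*} {G : SimpleGraph V} {a b : V}
    (hab : a ≠ b)
    (h : ∀ H : G.Subgraph, ¬ cliqueSub H →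
      ((vc (⊤ : G.Subgraph) : ℚ) - 2) * ec H ≤ ((vc H : ℚ) - 2) * ec (⊤ : G.Subgraph)) :
    IsGreatest (g1set G) (((vc (⊤ : G.Subgraph) : ℚ) - 2) / ec (⊤ : G.Subgraph)) := by
  have he₀ := Subgraph.ec_sup_singletonSubgraph (G := G) a b
  have hv₀ := Subgraph.vc_sup_singletonSubgraph (G := G) hab
  refine ⟨⟨_, fun h' => Subgraph.not_cliqueSub_sup_singletonSubgraph hab h'.2,
    Or.inr ⟨he₀, hv₀⟩, by rw [he₀, hv₀]; simp⟩, ?_⟩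
  rintro q ⟨H, hH, ⟨-, hlt⟩ | ⟨he, hv⟩, rfl⟩
  · have hnc : ¬ cliqueSub H := fun hc => hH ⟨by rintro rfl; exact lt_irrefl _ hlt, hc⟩
    have hlt' : (ec H : ℚ) < ec (⊤ : G.Subgraph) := by exact_mod_cast hlt
    have he0 : (0 : ℚ) ≤ ec H := Nat.cast_nonneg _
    rw [div_le_div_iff₀ (by linarith) (by linarith)]
    nlinarith [h H hnc]
  · rw [he, hv]
    simp

theorem sub_two_mul_ec_le_of_deleteEdges_matchings {V : Type*} [Fintype V] [DecidableEq V]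
    {M₁ M₂ D : Finset (Sym2 V)}
    (hM₁ : ∀ e ∈ M₁, ∀ f ∈ M₁, e ≠ f → ∀ v : V, v ∈ e → v ∉ f)
    (hM₂ : ∀ e ∈ M₂, ∀ f ∈ M₂, e ≠ f → ∀ v : V, v ∈ e → v ∉ f)
    (hD : D ⊆ M₁ ∪ M₂) (hDdiag : ∀ z ∈ D, ¬ z.IsDiag)
    (hDcard : #D + 2 ≤ Fintype.card V)
    (hki : Fintype.card V ≠ 5 ∨ #D ≠ 3)
    {H : ((⊤ : SimpleGraph V).deleteEdges ↑D).Subgraph} (hH : ¬ cliqueSub H) :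
    ((vc (⊤ : ((⊤ : SimpleGraph V).deleteEdges ↑D).Subgraph) : ℚ) - 2) * ec H ≤
      ((vc H : ℚ) - 2) * ec (⊤ : ((⊤ : SimpleGraph V).deleteEdges ↑D).Subgraph) := by
  obtain ⟨S, hS⟩ := H.verts.toFinite.exists_finset_coe
  have hn : vc H = #S := by rw [vc, ← hS, Set.ncard_coe_finset]
  have hmiss := H.ec_add_one_le_choose_two hH
  have hin := Subgraph.ec_add_card_inter_sym2_le_choose_two hDdiag hS.symm
  have hout := card_sdiff_sym2_le_two_mul_card_compl hM₁ hM₂ hD S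
  have hsplit := card_inter_add_card_sdiff D S.sym2
  have htop := ec_top_deleteEdges_add_card hDdiag
  have hnk : vc H ≤ Fintype.card V := hn ▸ card_le_univ S
  rw [card_compl, ← hn] at hout
  have hn2 : 2 ≤ vc H := by
    by_contra h
    rw [Nat.choose_eq_zero_of_lt (by omega)] at hmiss
    omega
  have hcn := two_mul_cast_choose_two (vc H)
  have hck := two_mul_cast_choose_two (Fintype.card V)
  have key := sub_two_mul_two_mul_le (k := Fintype.card V) (n := vc H) (i := #D) (e := ec H)
    (by exact_mod_cast hn2) (by exact_mod_cast hnk) (by exact_mod_cast hDcard)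
    (by exact_mod_cast hki) (by zify at hmiss; linarith)
    (by zify [hnk] at hin hout hsplit; linarith)
  zify at htop
  rw [Subgraph.vc_top]
  exact_mod_cast (by nlinarith : ((Fintype.card V : ℤ) - 2) * ec H ≤
    ((vc H : ℤ) - 2) * ec (⊤ : ((⊤ : SimpleGraph V).deleteEdges ↑D).Subgraph))

theorem stmt_7_general (k i : ℕ) (hk : 3 ≤ k) (hi2 : i ≤ k - 2)
    (M1 M2 D : Finset (Sym2 (Fin k)))
    (hM1d : ∀ e ∈ M1, ¬ e.IsDiag) (hM2d : ∀ e ∈ M2, ¬ e.IsDiag)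
    (hM1m : ∀ e ∈ M1, ∀ f ∈ M1, e ≠ f → ∀ v : Fin k, v ∈ e → v ∉ f)
    (hM2m : ∀ e ∈ M2, ∀ f ∈ M2, e ≠ f → ∀ v : Fin k, v ∈ e → v ∉ f)
    (hD : D ⊆ M1 ∪ M2) (hDcard : D.card = i)
    (hki : k ≠ 5 ∨ i ≠ 3) :
    IsGreatest
      (g1set ((⊤ : SimpleGraph (Fin k)).deleteEdges (↑D : Set (Sym2 (Fin k)))))
      (((k : ℚ) - 2) / ((k.choose 2 : ℚ) - (i : ℚ))) := by
  have hDdiag : ∀ z ∈ D, ¬ z.IsDiag := fun z hz => (mem_union.1 (hD hz)).elim (hM1d z) (hM2d z)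
  have hvc : vc (⊤ : ((⊤ : SimpleGraph (Fin k)).deleteEdges ↑D).Subgraph) = k := by
    rw [Subgraph.vc_top, Fintype.card_fin]
  have hec : (ec (⊤ : ((⊤ : SimpleGraph (Fin k)).deleteEdges ↑D).Subgraph) : ℚ) =
      k.choose 2 - i := by
    have htop := ec_top_deleteEdges_add_card hDdiag
    rw [Fintype.card_fin, hDcard] at htop
    rw [← htop]
    push_cast
    ring
  have h := isGreatest_g1set_of_forall_not_cliqueSub (a := (⟨0, by omega⟩ : Fin k))
    (b := ⟨1, by omega⟩) (by simp [Fin.ext_iff]) fun H hH =>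
      sub_two_mul_ec_le_of_deleteEdges_matchings hM1m hM2m hD hDdiag
        (by rw [Fintype.card_fin, hDcard]; omega) (by rwa [Fintype.card_fin, hDcard]) hH
  rwa [hvc, hec] at h

/-- For `H_i = K_k` minus `i` edges taken from two edge-disjoint matchings
(first those of `M₁`, then those of `M₂`), if `k ≠ 5` or `i ≠ 3`, then
`g₁(H_i) = (k-2)/(C(k,2)-i)`. -/
theorem stmt_7 (k i : ℕ) (hk : 3 ≤ k) (hi1 : 1 ≤ i) (hi2 : i ≤ k - 2)
    (M1 M2 D : Finset (Sym2 (Fin k)))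
    (hM1d : ∀ e ∈ M1, ¬ e.IsDiag) (hM2d : ∀ e ∈ M2, ¬ e.IsDiag)
    (hM1m : ∀ e ∈ M1, ∀ f ∈ M1, e ≠ f → ∀ v : Fin k, v ∈ e → v ∉ f)
    (hM2m : ∀ e ∈ M2, ∀ f ∈ M2, e ≠ f → ∀ v : Fin k, v ∈ e → v ∉ f)
    (hdisj : Disjoint M1 M2)
    (hc1 : M1.card = k / 2) (hc2 : M2.card = k - 2 - k / 2)
    (hD : D ⊆ M1 ∪ M2) (hDcard : D.card = i) (hDord : D ⊆ M1 ∨ M1 ⊆ D)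
    (hki : k ≠ 5 ∨ i ≠ 3) :
    IsGreatest
      (g1set ((⊤ : SimpleGraph (Fin k)).deleteEdges (↑D : Set (Sym2 (Fin k)))))
      (((k : ℚ) - 2) / ((k.choose 2 : ℚ) - (i : ℚ))) :=
  stmt_7_general k i hk hi2 M1 M2 D hM1d hM2d hM1m hM2m hD hDcard hki
end

section
/- Let k ≥ 3 be an integer and 1 ≤ i ≤ k-2. Let H_i be the graph obtained from the complete graph K_k by deleting i edges forming a union of two edge-disjoint matchings as described. Then g_2(H_i) = (v(H_i)-2)/(e(H_i)-1) = (k-2)/(binom(k,2)-i-1). -/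
open SimpleGraph

lemma two_mul_choose_two (n : ℕ) : 2 * n.choose 2 = n * (n - 1) := by
  rw [Nat.choose_two_right, Nat.mul_div_cancel' (Nat.even_mul_pred_self n).two_dvd]

lemma clique_ec {V : Type*} [Fintype V] [DecidableEq V] {G : SimpleGraph V}
    (H' : G.Subgraph) (hcl : cliqueSub H') : ec H' = (vc H').choose 2 := by
  classical
  have hinj : Function.Injective (Sym2.map ((↑) : H'.verts → V)) :=
    Sym2.map.injective Subtype.coe_injective
  have h1 : ec H' = H'.coe.edgeSet.ncard := by
    rw [ec, ← Subgraph.image_coe_edgeSet_coe, Set.ncard_image_of_injective _ hinj]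
  have htop : H'.coe = (⊤ : SimpleGraph H'.verts) := by
    ext a b
    simp only [Subgraph.coe_adj, top_adj]
    constructor
    · exact fun h => Subtype.coe_injective.ne_iff.mp h.ne
    · intro h
      exact hcl a.2 b.2 (fun hab => h (Subtype.ext hab))
  have hvc : vc H' = Fintype.card H'.verts := by
    rw [vc, Set.ncard_eq_toFinset_card', Set.toFinset_card]
  rw [h1, htop, hvc, Set.ncard_eq_toFinset_card']
  exact card_edgeFinset_top_eq_card_choose_two

lemma matching_bound {k : ℕ} (hk : 0 < k) (M : Finset (Sym2 (Fin k))) (S : Set (Fin k))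
    (hMm : ∀ e ∈ M, ∀ f ∈ M, e ≠ f → ∀ v : Fin k, v ∈ e → v ∉ f)
    (hS : ∀ e ∈ M, ∃ v ∈ e, v ∉ S) :
    S.ncard + M.card ≤ k := by
  classical
  haveI : Inhabited (Fin k) := ⟨⟨0, hk⟩⟩
  set T := S.toFinset with hT
  let f : Sym2 (Fin k) → Fin k := fun e =>
    if h : ∃ v ∈ e, v ∉ S then h.choose else default
  have hf : ∀ e ∈ M, f e ∈ e ∧ f e ∉ S := by
    intro e he
    have h := hS e he
    simp only [f, dif_pos h]
    exact h.choose_spec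
  have hmaps : ∀ e ∈ M, f e ∈ Tᶜ := by
    intro e he
    simp only [Finset.mem_compl, hT, Set.mem_toFinset]
    exact (hf e he).2
  have hinj : Set.InjOn f M := by
    intro e he e' he' hfe
    by_contra hne
    exact hMm e he e' he' hne (f e) (hf e he).1 (hfe ▸ (hf e' he').1)
  have := Finset.card_le_card_of_injOn f hmaps hinj
  rw [Finset.card_compl] at this
  have hTc : T.card = S.ncard := by rw [Set.ncard_eq_toFinset_card']
  have h2 : T.card ≤ k := by simpa using T.card_le_univ
  simp only [Fintype.card_fin] at this
  omega
lemma final_ineq (k i v : ℕ) (hiC : i + 2 ≤ k.choose 2) (hv3 : 3 ≤ v)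
    (hkey : ((k:ℚ) - 2) * ((v:ℚ) + 1) ≤ (k:ℚ)^2 - k - 2*i - 2) :
    ((k : ℚ) - 2) / ((k.choose 2 : ℚ) - i - 1) ≤ ((v:ℚ) - 2) / ((v.choose 2 : ℚ) - 1) := by
  have cast_choose : ∀ n : ℕ, 1 ≤ n → 2 * ((n.choose 2 : ℚ)) = n * (n - 1) := by
    intro n hn
    have h := two_mul_choose_two n
    have : ((2 * n.choose 2 : ℕ) : ℚ) = ((n * (n - 1) : ℕ) : ℚ) := by rw [h]
    rw [Nat.cast_mul, Nat.cast_mul, Nat.cast_sub hn] at this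
    push_cast at this ⊢
    linarith
  have f1 : 2 * ((v.choose 2 : ℚ)) = v * (v - 1) := cast_choose v (by omega)
  have f2 : 2 * ((k.choose 2 : ℚ)) = k * (k - 1) := by
    refine cast_choose k ?_
    by_contra h
    interval_cases k <;> simp_all
  have hI : (0:ℚ) ≤ i := by positivity
  have hd1 : (0:ℚ) < (k.choose 2 : ℚ) - i - 1 := by
    have : ((i + 2 : ℕ) : ℚ) ≤ (k.choose 2 : ℚ) := by exact_mod_cast hiC
    push_cast at this
    linarith
  have hVc : (3:ℚ) ≤ (v:ℚ) := by exact_mod_cast hv3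
  have hd2 : (0:ℚ) < (v.choose 2 : ℚ) - 1 := by
    have h3 : 3 ≤ v.choose 2 := Nat.choose_le_choose 2 hv3
    have : ((3:ℕ):ℚ) ≤ (v.choose 2 : ℚ) := by exact_mod_cast h3
    push_cast at this
    linarith
  rw [div_le_div_iff₀ hd1 hd2]
  have hv2 : (0:ℚ) ≤ (v:ℚ) - 2 := by linarith
  nlinarith [mul_le_mul_of_nonneg_left hkey hv2, f1, f2]

/-- For `H_i = K_k` minus `i` edges taken from two edge-disjoint matchings,
`g₂(H_i) = (k-2)/(C(k,2)-i-1)`. -/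
theorem stmt_8 (k i : ℕ) (hk : 3 ≤ k) (hi1 : 1 ≤ i) (hi2 : i ≤ k - 2)
    (M1 M2 D : Finset (Sym2 (Fin k)))
    (hM1d : ∀ e ∈ M1, ¬ e.IsDiag) (hM2d : ∀ e ∈ M2, ¬ e.IsDiag)
    (hM1m : ∀ e ∈ M1, ∀ f ∈ M1, e ≠ f → ∀ v : Fin k, v ∈ e → v ∉ f)
    (hM2m : ∀ e ∈ M2, ∀ f ∈ M2, e ≠ f → ∀ v : Fin k, v ∈ e → v ∉ f)
    (hdisj : Disjoint M1 M2)
    (hc1 : M1.card = k / 2) (hc2 : M2.card = k - 2 - k / 2)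
    (hD : D ⊆ M1 ∪ M2) (hDcard : D.card = i) (hDord : D ⊆ M1 ∨ M1 ⊆ D) :
    IsLeast
      (g2set ((⊤ : SimpleGraph (Fin k)).deleteEdges (↑D : Set (Sym2 (Fin k)))))
      (((k : ℚ) - 2) / ((k.choose 2 : ℚ) - (i : ℚ) - 1)) := by
  classical
  set G := (⊤ : SimpleGraph (Fin k)).deleteEdges (↑D : Set (Sym2 (Fin k))) with hG
  have hDd : ∀ e ∈ D, ¬ e.IsDiag := by
    intro e he
    rcases Finset.mem_union.mp (hD he) with h | h
    exacts [hM1d e h, hM2d e h]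
  have hDtop : (↑D : Set (Sym2 (Fin k))) ⊆ (⊤ : SimpleGraph (Fin k)).edgeSet := by
    intro e he
    rw [edgeSet_top]
    exact hDd e he
  have htopcard : (⊤ : SimpleGraph (Fin k)).edgeSet.ncard = k.choose 2 := by
    rw [← Nat.card_coe_set_eq, Nat.card_eq_fintype_card, ← edgeFinset_card,
      card_edgeFinset_top_eq_card_choose_two, Fintype.card_fin]
  have hiC : i + 2 ≤ k.choose 2 := by
    have h2 := two_mul_choose_two k
    have h3 : 2 * k ≤ k * (k - 1) := Nat.mul_le_mul_right k (by omega) |>.trans_eq (Nat.mul_comm _ _)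
    omega
  have hecT : ec (⊤ : G.Subgraph) = k.choose 2 - i := by
    rw [ec, Subgraph.edgeSet_top, hG, edgeSet_deleteEdges,
      Set.ncard_diff hDtop (Set.toFinite _), htopcard, Set.ncard_coe_finset, hDcard]
  have hvcT : vc (⊤ : G.Subgraph) = k := by
    rw [vc, Subgraph.verts_top, Set.ncard_univ, Nat.card_eq_fintype_card, Fintype.card_fin]
  have hcast : ((k.choose 2 - i : ℕ) : ℚ) = (k.choose 2 : ℚ) - i := by
    rw [Nat.cast_sub (by omega)]
  constructor
  · refine ⟨⊤, by rw [hecT]; omega, Or.inr rfl, ?_⟩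
    rw [hvcT, hecT, hcast]
  · rintro q ⟨H', he2, hcase, rfl⟩
    rcases hcase with ⟨hne, hcl⟩ | rfl
    · -- proper clique subgraph
      have hEc := clique_ec H' hcl
      rw [hEc] at he2
      have hv3 : 3 ≤ vc H' := by
        by_contra h
        push_neg at h
        interval_cases h' : vc H' <;> simp_all
      have hSadj : ∀ e ∈ D, ∃ x ∈ e, x ∉ H'.verts := by
        intro e he
        by_contra hno
        push_neg at hno
        revert he
        induction e using Sym2.ind with
        | _ a b =>
          intro he
          have hab : a ≠ b := by
            intro h
            exact hDd _ he (by simp [h])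
          have hadj : H'.Adj a b :=
            hcl (hno a (by simp)) (hno b (by simp)) hab
          have hGadj := H'.adj_sub hadj
          rw [hG, deleteEdges_adj] at hGadj
          exact hGadj.2 (by exact_mod_cast he)
      rw [hEc]
      rcases hDord with hsub | hsup
      · -- D ⊆ M1 : D is a matching, vc + i ≤ k
        have hb := matching_bound (by omega) D H'.verts
          (fun e he f hf => hM1m e (hsub he) f (hsub hf)) hSadj
        rw [hDcard] at hb
        have hb' : vc H' + i ≤ k := hb
        refine final_ineq k i (vc H') hiC hv3 ?_
        have h1 : (vc H' : ℚ) + i ≤ k := by exact_mod_cast hb'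
        have hVc : (3:ℚ) ≤ (vc H' : ℚ) := by exact_mod_cast hv3
        have hIc : (1:ℚ) ≤ (i:ℚ) := by exact_mod_cast hi1
        have hk2 : (0:ℚ) ≤ (k:ℚ) - 2 := by
          have : (3:ℚ) ≤ (k:ℚ) := by exact_mod_cast hk
          linarith
        have hk4 : (0:ℚ) ≤ (k:ℚ) - 4 := by linarith
        nlinarith [mul_le_mul_of_nonneg_left
          (show (vc H' : ℚ) + 1 ≤ (k:ℚ) - i + 1 by linarith) hk2,
          mul_nonneg (by linarith : (0:ℚ) ≤ (i:ℚ)) hk4]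
      · -- M1 ⊆ D : vc + k/2 ≤ k
        have hb := matching_bound (by omega) M1 H'.verts hM1m
          (fun e he => hSadj e (hsup he))
        rw [hc1] at hb
        have hb' : vc H' + k / 2 ≤ k := hb
        refine final_ineq k i (vc H') hiC hv3 ?_
        have hvk2 : vc H' + 2 ≤ k := by omega
        have h1 : (vc H' : ℚ) + 2 ≤ (k:ℚ) := by exact_mod_cast hvk2
        have hIc : (i:ℚ) ≤ (k:ℚ) - 2 := by
          have : ((i + 2 : ℕ) : ℚ) ≤ (k:ℚ) := by exact_mod_cast (by omega : i + 2 ≤ k)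
          push_cast at this
          linarith
        have hk2 : (0:ℚ) ≤ (k:ℚ) - 2 := by
          have : (3:ℚ) ≤ (k:ℚ) := by exact_mod_cast hk
          linarith
        nlinarith [mul_le_mul_of_nonneg_left
          (show (vc H' : ℚ) + 1 ≤ (k:ℚ) - 1 by linarith) hk2]
    · -- H' = ⊤
      rw [hvcT, hecT, hcast]
end
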